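/- arXiv:2603.00428 — 3 statements merged into one kernel-verified Lean document; each statement's English description precedes it below -/
import Mathlib

section
/- Let p > 1 and let H be an r-uniform hypergraph with m edges. Then the p-spectral radius of H satisfies λ^(p)(H) ≤ (r!·m)^{1-1/p}. -/
open Finset

/-- `P_H(x) = r! * sum_{e in E} prod_{v in e} x_v` for an `r`-uniform hypergraph
with edge set `E` on vertex set `Fin n`. -/
noncomputable def polyForm (n r : Nat) (E : Finset (Finset (Fin n))) (x : Fin n -> Real) : Real :=
  (Nat.factorial r : Real) * Finset.sum E (fun e => Finset.prod e (fun v => x v))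

/-- The `p`-spectral radius: the supremum of `P_H(x)` over all `x` with unit `p`-norm. -/
noncomputable def pSpec (n r : Nat) (E : Finset (Finset (Fin n))) (p : Real) : Real :=
  sSup {y : Real | exists x : Fin n -> Real, (Finset.sum Finset.univ fun i => |x i| ^ p) = 1 /\ y = polyForm n r E x}

/-!
Replacing `x` by `|x|` can only increase `P_H`, and for the nonnegative numbers
`a_e = ∏_{v ∈ e} |x_v|` the power mean inequality gives `(∑_e a_e)^p ≤ m^(p-1) ∑_e a_e^p`.
Finally `r! ∑_e ∏_{v ∈ e} |x_v|^p ≤ (∑_v |x_v|^p)^r = 1`: in the multinomial expansion of the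
right-hand side each edge `e` is a squarefree monomial with coefficient `r!`, and all other terms
are nonnegative. Together, `P_H(x)^p ≤ (r! m)^(p-1)`.
-/

open scoped Nat

theorem Nat.multinomial_univ_indicator_one {ι : Type*} [Fintype ι] (e : Finset ι) :
    Nat.multinomial univ ((e : Set ι).indicator 1) = (#e)! := by
  classical
  have h := Nat.multinomial_spec univ ((e : Set ι).indicator 1)
  simpa [Set.indicator_apply, apply_ite Nat.factorial] using h

theorem Finset.factorial_mul_sum_prod_le_pow_sum {ι R : Type*} [Fintype ι] [CommSemiring R]
    [PartialOrder R] [IsOrderedRing R] {y : ι → R} (hy : 0 ≤ y) {E : Finset (Finset ι)} {r : ℕ}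
    (hE : ∀ e ∈ E, #e = r) :
    (r ! : R) * ∑ e ∈ E, ∏ v ∈ e, y v ≤ (∑ v, y v) ^ r := by
  classical
  set χ : Finset ι → ι → ℕ := fun e => (e : Set ι).indicator 1
  have hχ_mem : ∀ e ∈ E, χ e ∈ piAntidiag univ r := fun e he => by
    simp [χ, Set.indicator_apply, hE e he]
  have hχ_inj : Set.InjOn χ E := fun _ _ _ _ h => Finset.coe_injective (Set.indicator_one_inj ℕ h)
  have hterm : ∀ e ∈ E, r ! * ∏ v ∈ e, y v = (Nat.multinomial univ (χ e) : R) * ∏ v, y v ^ χ e v :=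
    fun e he => by
      simp [χ, Nat.multinomial_univ_indicator_one, hE e he, Set.indicator_apply, pow_ite, prod_ite_mem]
  rw [sum_pow_eq_sum_piAntidiag, mul_sum, sum_congr rfl hterm,
    ← sum_image (f := fun k => (Nat.multinomial univ k : R) * ∏ v, y v ^ k v) hχ_inj]
  exact sum_le_sum_of_subset_of_nonneg (image_subset_iff.2 hχ_mem)
    fun k _ _ => mul_nonneg (Nat.cast_nonneg _) (prod_nonneg fun v _ => pow_nonneg (hy v) _)

theorem polyForm_nonneg {n r : ℕ} (E : Finset (Finset (Fin n))) {z : Fin n → ℝ} (hz : 0 ≤ z) :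
    0 ≤ polyForm n r E z :=
  mul_nonneg (Nat.cast_nonneg _) (sum_nonneg fun _ _ => prod_nonneg fun v _ => hz v)

theorem polyForm_le_polyForm_abs (n r : ℕ) (E : Finset (Finset (Fin n))) (x : Fin n → ℝ) :
    polyForm n r E x ≤ polyForm n r E (fun v => |x v|) :=
  mul_le_mul_of_nonneg_left
    (sum_le_sum fun e _ => (le_abs_self _).trans (abs_prod e x).le) (Nat.cast_nonneg _)

theorem polyForm_rpow_le {n r : ℕ} {E : Finset (Finset (Fin n))} (hE : ∀ e ∈ E, #e = r)
    {z : Fin n → ℝ} (hz : 0 ≤ z) {p : ℝ} (hp : 1 ≤ p) :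
    polyForm n r E z ^ p ≤ ((r ! : ℝ) * #E) ^ (p - 1) * (∑ v, z v ^ p) ^ r := by
  have hprod_nonneg : ∀ e ∈ E, 0 ≤ ∏ v ∈ e, z v := fun e _ => prod_nonneg fun v _ => hz v
  have hpower_mean := Real.rpow_sum_le_const_mul_sum_rpow_of_nonneg E hp hprod_nonneg
  have hprod_rpow : ∀ e ∈ E, (∏ v ∈ e, z v) ^ p = ∏ v ∈ e, z v ^ p :=
    fun e _ => (Real.finsetProd_rpow e z (fun v _ => hz v) p).symm
  have hfact : (0 : ℝ) < r ! := by positivity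
  calc polyForm n r E z ^ p = (r ! : ℝ) ^ p * (∑ e ∈ E, ∏ v ∈ e, z v) ^ p :=
        Real.mul_rpow hfact.le (sum_nonneg hprod_nonneg)
    _ ≤ (r ! : ℝ) ^ p * ((#E : ℝ) ^ (p - 1) * ∑ e ∈ E, ∏ v ∈ e, z v ^ p) := by
        rw [← sum_congr rfl hprod_rpow]
        exact mul_le_mul_of_nonneg_left hpower_mean (by positivity)
    _ = ((r ! : ℝ) * #E) ^ (p - 1) * ((r ! : ℝ) * ∑ e ∈ E, ∏ v ∈ e, z v ^ p) := by
        rw [Real.mul_rpow hfact.le (Nat.cast_nonneg _), Real.rpow_sub_one hfact.ne']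
        field_simp
    _ ≤ ((r ! : ℝ) * #E) ^ (p - 1) * (∑ v, z v ^ p) ^ r := by
        gcongr
        exact factorial_mul_sum_prod_le_pow_sum (fun v => Real.rpow_nonneg (hz v) p) hE

theorem pSpec_le_of_edges_general (n r : Nat) (E : Finset (Finset (Fin n)))
    (hE : forall e, e ∈ E -> e.card = r) (p : Real) (hp : 1 < p) :
    pSpec n r E p <= ((Nat.factorial r : Real) * E.card) ^ (1 - 1 / p) := by
  have hp_pos : 0 < p := one_pos.trans hp
  refine Real.sSup_le ?_ (by positivity)
  rintro _ ⟨x, hx, rfl⟩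
  have habs_nonneg : 0 ≤ fun v => |x v| := fun v => abs_nonneg (x v)
  have hbound : polyForm n r E (fun v => |x v|) ^ p ≤ ((r ! : ℝ) * #E) ^ (p - 1) := by
    simpa [hx] using polyForm_rpow_le hE habs_nonneg hp.le
  calc polyForm n r E x ≤ polyForm n r E (fun v => |x v|) := polyForm_le_polyForm_abs n r E x
    _ ≤ (((r ! : ℝ) * #E) ^ (p - 1)) ^ p⁻¹ :=
        (Real.le_rpow_inv_iff_of_pos (polyForm_nonneg E habs_nonneg) (by positivity) hp_pos).2 hbound
    _ = ((r ! : ℝ) * #E) ^ (1 - 1 / p) := by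
        rw [← Real.rpow_mul (by positivity)]
        congr 1
        field_simp

theorem pSpec_le_of_edges (n r : Nat) (hr : 2 <= r) (E : Finset (Finset (Fin n)))
    (hE : forall e, e ∈ E -> e.card = r) (p : Real) (hp : 1 < p) :
    pSpec n r E p <= ((Nat.factorial r : Real) * E.card) ^ (1 - 1 / p) :=
  pSpec_le_of_edges_general n r E hE p hp
end

section
/- For an r-uniform hypergraph H, (1/r!)·λ^(∞)(H) equals the number of edges of H, i.e., lim_{p→∞} λ^(p)(H) = r!·e(H). -/
/-!
On the unit `p`-sphere every coordinate satisfies `|x_i| ≤ 1`, so each monomial is at most `1`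
and `λ^(p)(H) ≤ r! e(H)`. Conversely the constant vector with entries `n^(-1/p)` lies on that
sphere and gives `λ^(p)(H) ≥ r! e(H) n^(-r/p)`, which tends to `r! e(H)` as `p → ∞`.
-/

open Finset

open Filter Topology

lemma abs_le_one_of_sum_abs_rpow_eq_one {ι : Type*} [Fintype ι] {x : ι → ℝ} {p : ℝ}
    (hp : 0 < p) (hx : ∑ i, |x i| ^ p = 1) (i : ι) : |x i| ≤ 1 := by
  have hxi : |x i| ^ p ≤ 1 :=
    hx ▸ single_le_sum (fun j _ => Real.rpow_nonneg (abs_nonneg (x j)) p) (mem_univ i)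
  exact le_of_not_gt fun hlt => hxi.not_gt (Real.one_lt_rpow hlt hp)

lemma sum_abs_rpow_card_inv_rpow_inv (ι : Type*) [Fintype ι] [Nonempty ι] {p : ℝ} (hp : p ≠ 0) :
    ∑ _ : ι, |((Fintype.card ι : ℝ)⁻¹ ^ p⁻¹)| ^ p = 1 := by
  have hcard : (0 : ℝ) < Fintype.card ι := by exact_mod_cast Fintype.card_pos
  rw [sum_const, card_univ, abs_of_nonneg (by positivity), Real.rpow_inv_rpow (by positivity) hp,
    nsmul_eq_mul, mul_inv_cancel₀ hcard.ne']

lemma tendsto_rpow_inv_atTop_one {a : ℝ} (ha : 0 < a) :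
    Tendsto (fun p : ℝ => a ^ p⁻¹) atTop (𝓝 1) := by
  simpa [Function.comp_def] using
    (Real.continuousAt_const_rpow ha.ne' (b := 0)).tendsto.comp tendsto_inv_atTop_zero

section polyForm

variable {n r : ℕ} {E : Finset (Finset (Fin n))}

lemma polyForm_le_of_abs_le_one {x : Fin n → ℝ} (hx : ∀ i, |x i| ≤ 1) :
    polyForm n r E x ≤ r.factorial * E.card := by
  have hmonomial : ∀ e ∈ E, ∏ v ∈ e, x v ≤ 1 := fun e _ =>
    calc ∏ v ∈ e, x v ≤ ∏ v ∈ e, |x v| := (le_abs_self _).trans (abs_prod _ _).le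
      _ ≤ 1 := prod_le_one (fun v _ => abs_nonneg _) (fun v _ => hx v)
  unfold polyForm
  gcongr
  simpa using sum_le_sum hmonomial

lemma polyForm_const (hE : ∀ e ∈ E, e.card = r) (c : ℝ) :
    polyForm n r E (fun _ => c) = r.factorial * E.card * c ^ r := by
  rw [polyForm, sum_congr rfl fun e he => by rw [prod_const, hE e he], sum_const, nsmul_eq_mul,
    mul_assoc]

lemma polyForm_le_of_sum_abs_rpow_eq_one {p : ℝ} (hp : 0 < p) {x : Fin n → ℝ}
    (hx : ∑ i, |x i| ^ p = 1) : polyForm n r E x ≤ r.factorial * E.card :=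
  polyForm_le_of_abs_le_one (abs_le_one_of_sum_abs_rpow_eq_one hp hx)

lemma pSpec_le {p : ℝ} (hp : 0 < p) : pSpec n r E p ≤ r.factorial * E.card :=
  Real.sSup_le (by rintro _ ⟨x, hx, rfl⟩; exact polyForm_le_of_sum_abs_rpow_eq_one hp hx)
    (by positivity)

lemma polyForm_le_pSpec {p : ℝ} (hp : 0 < p) {x : Fin n → ℝ} (hx : ∑ i, |x i| ^ p = 1) :
    polyForm n r E x ≤ pSpec n r E p :=
  le_csSup ⟨r.factorial * E.card, by
    rintro _ ⟨y, hy, rfl⟩; exact polyForm_le_of_sum_abs_rpow_eq_one hp hy⟩ ⟨x, hx, rfl⟩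

lemma le_pSpec (hn : 0 < n) (hE : ∀ e ∈ E, e.card = r) {p : ℝ} (hp : 0 < p) :
    r.factorial * E.card * ((n : ℝ)⁻¹ ^ p⁻¹) ^ r ≤ pSpec n r E p := by
  have : Nonempty (Fin n) := Fin.pos_iff_nonempty.mp hn
  rw [← polyForm_const hE]
  exact polyForm_le_pSpec hp (by simpa using sum_abs_rpow_card_inv_rpow_inv (Fin n) hp.ne')

lemma pSpec_fin_zero (r : ℕ) (E : Finset (Finset (Fin 0))) (p : ℝ) : pSpec 0 r E p = 0 := by
  simp [pSpec]

end polyForm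

theorem pSpec_tendsto_edges (n r : Nat) (hr : 2 <= r) (E : Finset (Finset (Fin n)))
    (hE : forall e, e ∈ E -> e.card = r) :
    Filter.Tendsto (fun p : Real => pSpec n r E p) Filter.atTop
      (nhds ((Nat.factorial r : Real) * E.card)) := by
  obtain rfl | hn := n.eq_zero_or_pos
  · have hE_empty : E = ∅ := eq_empty_of_forall_notMem fun e he => by
      have := hE e he
      simp only [card_eq_zero.mpr (eq_empty_of_isEmpty e)] at this
      omega
    simp [hE_empty, pSpec_fin_zero]
  have hlower : Tendsto (fun p : ℝ => r.factorial * E.card * ((n : ℝ)⁻¹ ^ p⁻¹) ^ r) atTop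
      (𝓝 (r.factorial * E.card)) := by
    have hn_inv : (0 : ℝ) < (n : ℝ)⁻¹ := by positivity
    simpa using ((tendsto_rpow_inv_atTop_one hn_inv).pow r).const_mul ((r.factorial : ℝ) * E.card)
  exact tendsto_of_tendsto_of_tendsto_of_le_of_le' hlower tendsto_const_nhds
    ((eventually_gt_atTop 0).mono fun p hp => le_pSpec hn hE hp)
    ((eventually_gt_atTop 0).mono fun p hp => pSpec_le hp)
end

section
/- Let p > 9/8, let n_1 ≥ ... ≥ n_k be positive integers with n_1 ≥ n_k + 2, and let y_1, ..., y_k be positive reals with n_1 y_1^p + ... + n_k y_k^p = 1. Set y* = ((n_1 y_1^p + n_k y_k^p)/(n_1 + n_k))^{1/p}. Then n_1 n_k y_1 y_k < ⌈(n_1+n_k)/2⌉·⌊(n_1+n_k)/2⌋·(y*)^2. -/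
/-! With `s = 1/p`, `u = y₁ᵖ`, `v = y_kᵖ` and `S = n₁u + n_kv`, AM-GM gives
`n₁n_k · y₁y_k ≤ (n₁n_k)^(1-s) (S²/4)^s`, and weighted AM-GM bounds
`(n₁n_k)^(1-s) ((n₁+n_k)²/4)^s` by `(1-s) n₁n_k + s (n₁+n_k)²/4`. Since `n₁ ≥ n_k + 2`, the
product `n₁n_k` is at least one (two when `n₁ + n_k` is odd) below `⌈(n₁+n_k)/2⌉⌊(n₁+n_k)/2⌋`,
which itself is `(n₁+n_k)²/4` or `((n₁+n_k)² - 1)/4`; the odd case closes exactly when `s < 8/9`. -/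

open Real

lemma Nat.four_mul_ceil_half_mul_floor_half (N : ℕ) :
    4 * ((N + 1) / 2 * (N / 2)) + N % 2 = N ^ 2 := by
  obtain ⟨e, rfl | rfl⟩ := N.even_or_odd'
  · rw [show (2 * e + 1) / 2 = e by omega, show 2 * e / 2 = e by omega, Nat.mul_mod_right]; ring
  · rw [show (2 * e + 1 + 1) / 2 = e + 1 by omega, show (2 * e + 1) / 2 = e by omega,
      show (2 * e + 1) % 2 = 1 by omega]
    ring

lemma Nat.mul_add_one_add_mod_two_le {n m : ℕ} (h : m + 2 ≤ n) :
    n * m + 1 + (n + m) % 2 ≤ (n + m + 1) / 2 * ((n + m) / 2) := by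
  have hsq := Nat.four_mul_ceil_half_mul_floor_half (n + m)
  obtain ⟨d, rfl⟩ : ∃ d, n = m + 2 + d := ⟨n - (m + 2), by omega⟩
  rcases Nat.mod_two_eq_zero_or_one (m + 2 + d + m) with hr | hr <;> rw [hr] at hsq ⊢
  · nlinarith
  · -- an odd sum forces an odd gap `n - m ≥ 3`
    have hd : 1 ≤ d := by omega
    nlinarith

lemma geom_mean_lt_ceil_half_mul_floor_half {n m : ℕ} (h : m + 2 ≤ n) {s : ℝ} (hs₀ : 0 < s)
    (hs : s < 8 / 9) :
    ((n : ℝ) * m) ^ (1 - s) * (((n : ℝ) + m) ^ 2 / 4) ^ s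
      < (((n + m + 1) / 2 * ((n + m) / 2) : ℕ) : ℝ) := by
  have hsq := Nat.four_mul_ceil_half_mul_floor_half (n + m)
  have hle := Nat.mul_add_one_add_mod_two_le h
  generalize (n + m + 1) / 2 * ((n + m) / 2) = c at hsq hle ⊢
  have hamgm := geom_mean_le_arith_mean2_weighted (w₁ := 1 - s) (w₂ := s)
    (sub_nonneg.2 (by linarith)) hs₀.le (by positivity : (0 : ℝ) ≤ n * m)
    (by positivity : (0 : ℝ) ≤ (n + m) ^ 2 / 4) (by ring)
  rcases Nat.mod_two_eq_zero_or_one (n + m) with hr | hr <;> rw [hr] at hsq hle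
  · have hsq' : 4 * (c : ℝ) = (n + m) ^ 2 := by exact_mod_cast hsq
    have hle' : (n : ℝ) * m + 1 ≤ c := by exact_mod_cast hle
    nlinarith
  · have hsq' : 4 * (c : ℝ) + 1 = (n + m) ^ 2 := by exact_mod_cast hsq
    have hle' : (n : ℝ) * m + 2 ≤ c := by exact_mod_cast hle
    -- the slack `2 (1 - s)` beats the parity loss `s / 4` exactly when `s < 8/9`
    nlinarith

lemma mul_mul_rpow_le {n m u v s : ℝ} (hn : 0 ≤ n) (hm : 0 ≤ m) (hu : 0 ≤ u) (hv : 0 ≤ v)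
    (hs : 0 ≤ s) :
    n * m * (u * v) ^ s ≤ (n * m) ^ (1 - s) * ((n * u + m * v) ^ 2 / 4) ^ s := by
  have hnm : 0 ≤ n * m := mul_nonneg hn hm
  have hsplit : n * m = (n * m) ^ (1 - s) * (n * m) ^ s := by
    rw [← rpow_add' hnm (by norm_num), sub_add_cancel, rpow_one]
  have hamgm : n * m * (u * v) ≤ (n * u + m * v) ^ 2 / 4 := by
    nlinarith [sq_nonneg (n * u - m * v)]
  calc n * m * (u * v) ^ s = (n * m) ^ (1 - s) * (n * m * (u * v)) ^ s := by
        rw [mul_rpow hnm (mul_nonneg hu hv), ← mul_assoc, ← hsplit]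
    _ ≤ (n * m) ^ (1 - s) * ((n * u + m * v) ^ 2 / 4) ^ s := by gcongr

lemma sq_div_four_rpow_eq {S N : ℝ} (hS : 0 ≤ S) (hN : 0 < N) (s : ℝ) :
    (S ^ 2 / 4) ^ s = (N ^ 2 / 4) ^ s * ((S / N) ^ s) ^ 2 := by
  rw [rpow_pow_comm (div_nonneg hS hN.le), ← mul_rpow (by positivity) (by positivity)]
  congr 1
  field_simp

theorem kang_nikiforov_yuan_second_general (p : Real) (hp : 9 / 8 < p) (k : Nat)
    (nn : Fin (k + 1) -> Nat) (y : Fin (k + 1) -> Real)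
    (hypos : forall i, 0 < y i)
    (hgap : nn (Fin.last k) + 2 <= nn 0) :
    (nn 0 : Real) * (nn (Fin.last k) : Real) * y 0 * y (Fin.last k)
      < (((nn 0 + nn (Fin.last k) + 1) / 2 : Nat) : Real)
          * (((nn 0 + nn (Fin.last k)) / 2 : Nat) : Real) * ((((nn 0 : Real) * y 0 ^ p + (nn (Fin.last k) : Real) * y (Fin.last k) ^ p) / ((nn 0 : Real) + (nn (Fin.last k) : Real))) ^ (1 / p)) ^ (2 : Nat) := by
  set n := nn 0
  set m := nn (Fin.last k)
  set a := y 0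
  set b := y (Fin.last k)
  have ha := hypos 0
  have hb := hypos (Fin.last k)
  have hp₀ : 0 < p := by linarith
  have hs : 1 / p < 8 / 9 := by rw [div_lt_div_iff₀ hp₀ (by norm_num)]; linarith
  have hn : (0 : ℝ) < n := by exact_mod_cast (by omega : 0 < n)
  have hnm : (0 : ℝ) < n + m := by positivity
  have hS : 0 < ((n * a ^ p + m * b ^ p : ℝ) / (n + m)) ^ (1 / p) :=
    rpow_pos_of_pos (div_pos (add_pos_of_pos_of_nonneg (mul_pos hn (rpow_pos_of_pos ha p))
      (by positivity)) hnm) _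
  have hab : a * b = (a ^ p * b ^ p) ^ (1 / p) := by
    rw [← mul_rpow (by positivity) (by positivity), one_div, rpow_rpow_inv (by positivity) hp₀.ne']
  calc (n : ℝ) * m * a * b = n * m * (a ^ p * b ^ p) ^ (1 / p) := by rw [mul_assoc _ a, hab]
    _ ≤ (n * m : ℝ) ^ (1 - 1 / p) * ((n * a ^ p + m * b ^ p) ^ 2 / 4) ^ (1 / p) :=
      mul_mul_rpow_le (by positivity) (by positivity) (by positivity) (by positivity) (by positivity)
    _ = (n * m : ℝ) ^ (1 - 1 / p) * (((n : ℝ) + m) ^ 2 / 4) ^ (1 / p)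
          * (((n * a ^ p + m * b ^ p) / (n + m)) ^ (1 / p)) ^ 2 := by
      rw [sq_div_four_rpow_eq (by positivity) hnm, mul_assoc]
    _ < _ := mul_lt_mul_of_pos_right (by
      simpa only [Nat.cast_mul] using geom_mean_lt_ceil_half_mul_floor_half hgap (by positivity) hs)
      (pow_pos hS 2)

theorem kang_nikiforov_yuan_second (p : Real) (hp : 9 / 8 < p) (k : Nat)
    (nn : Fin (k + 1) -> Nat) (y : Fin (k + 1) -> Real)
    (hmono : forall i j : Fin (k + 1), i <= j -> nn j <= nn i)
    (hnpos : forall i, 0 < nn i) (hypos : forall i, 0 < y i)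
    (hsum : (Finset.sum Finset.univ fun i => (nn i : Real) * y i ^ p) = 1)
    (hgap : nn (Fin.last k) + 2 <= nn 0) :
    (nn 0 : Real) * (nn (Fin.last k) : Real) * y 0 * y (Fin.last k)
      < (((nn 0 + nn (Fin.last k) + 1) / 2 : Nat) : Real)
          * (((nn 0 + nn (Fin.last k)) / 2 : Nat) : Real) * ((((nn 0 : Real) * y 0 ^ p + (nn (Fin.last k) : Real) * y (Fin.last k) ^ p) / ((nn 0 : Real) + (nn (Fin.last k) : Real))) ^ (1 / p)) ^ (2 : Nat) :=
  kang_nikiforov_yuan_second_general p hp k nn y hypos hgap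
end
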